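/- arXiv:1912.10410 — 2 statements merged into one kernel-verified Lean document; each statement's English description precedes it below -/
import Mathlib

section
/- The power series s(k) solving k²s⁴ − 2k²s³ + 2s − 1 = 0 with s(0) = 1/2 satisfies the third-order linear differential equation 9k³(k−1)²(k+1)² s'''(k) + 9k²(k−1)(k+1)(5k²−1) s''(k) + k(35k⁴ − 14k² − 13) s'(k) − 4(k² − 2) s(k) = 4 − 2k². -/
open PowerSeries

/-! Write `P(x, s) = x²s⁴ − 2x²s³ + 2s − 1`. Differentiating `P(x, s) = 0` along a derivation `δ`
with `δ x = 1` gives `∂ₛP · δs = −∂ₓP`, and `∂ₛP = 4x²s³ − 6x²s² + 2` has constant term `2`, hence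
is a unit in `ℝ⟦X⟧`. Repeating the quotient rule and eliminating `δ s` each time, `(∂ₛP)³ δ²s` and
`(∂ₛP)⁵ δ³s` are explicit polynomials in `x` and `s`; substituting them, `(∂ₛP)⁵` times the residual
of the ODE is a polynomial multiple of `P`. -/

theorem Derivation.map_ofNat {R A M : Type*} [CommSemiring R] [CommSemiring A] [Algebra R A]
    [AddCommMonoid M] [Module A M] [Module R M] (D : Derivation R A M) (n : ℕ) [n.AtLeastTwo] :
    D (no_index (OfNat.ofNat n : A)) = 0 :=
  D.map_natCast n

/-- The quotient rule for `y = b / a ^ (k + 1)`, with denominators cleared. -/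
theorem Derivation.pow_add_three_mul_map_of_pow_add_one_mul_eq {R A : Type*} [CommRing R]
    [CommRing A] [Algebra R A] (δ : Derivation R A A) {a y b : A} (k : ℕ)
    (h : a ^ (k + 1) * y = b) : a ^ (k + 3) * δ y = a ^ 2 * δ b - (k + 1) * a * b * δ a := by
  have e := congrArg δ h
  simp only [Derivation.leibniz, Derivation.leibniz_pow, Nat.add_sub_cancel, smul_eq_mul,
    nsmul_eq_mul, Nat.cast_add_one] at e
  linear_combination a ^ 2 * e - (k + 1) * a * δ a * h

namespace QuarticODE

variable {R A : Type*} [CommRing R] [CommRing A] [Algebra R A] (δ : Derivation R A A) {x s : A}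

def quartic (x s : A) : A := x ^ 2 * s ^ 4 - 2 * x ^ 2 * s ^ 3 + 2 * s - 1

def quarticDerivS (x s : A) : A := 4 * x ^ 2 * s ^ 3 - 6 * x ^ 2 * s ^ 2 + 2

theorem quarticDerivS_mul_deriv (hx : δ x = 1) (h : quartic x s = 0) :
    quarticDerivS x s * δ s = 4 * x * s ^ 3 - 2 * x * s ^ 4 := by
  have e := congrArg δ h
  simp only [quartic, map_sub, map_add, Derivation.leibniz, Derivation.leibniz_pow, hx,
    Derivation.map_ofNat, Derivation.map_one_eq_zero, map_zero, smul_eq_mul, nsmul_eq_mul] at e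
  rw [quarticDerivS]
  linear_combination e

theorem deriv_quarticDerivS (hx : δ x = 1) :
    δ (quarticDerivS x s) =
      8 * x * s ^ 3 - 12 * x * s ^ 2 + (12 * x ^ 2 * s ^ 2 - 12 * x ^ 2 * s) * δ s := by
  simp only [quarticDerivS, map_sub, map_add, Derivation.leibniz, Derivation.leibniz_pow, hx,
    Derivation.map_ofNat, smul_eq_mul, nsmul_eq_mul]
  ring

theorem quarticDerivS_pow_three_mul_deriv_deriv (hx : δ x = 1) (h : quartic x s = 0) :
    quarticDerivS x s ^ 3 * δ (δ s) =
      16 * s ^ 3 - 8 * s ^ 4 + 96 * x ^ 2 * s ^ 5 - 112 * x ^ 2 * s ^ 6 + 32 * x ^ 2 * s ^ 7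
        - 240 * x ^ 4 * s ^ 7 + 408 * x ^ 4 * s ^ 8 - 240 * x ^ 4 * s ^ 9
        + 48 * x ^ 4 * s ^ 10 := by
  have h1 := quarticDerivS_mul_deriv δ hx h
  have e := δ.pow_add_three_mul_map_of_pow_add_one_mul_eq 0 (by simpa using h1)
  simp only [deriv_quarticDerivS δ hx, map_sub, Derivation.leibniz, Derivation.leibniz_pow, hx,
    Derivation.map_ofNat, smul_eq_mul, nsmul_eq_mul] at e
  set D := quarticDerivS x s with hD
  -- `δ s` enters `e` through `δ b` and `δ a`; its coefficient is `a · ∂ₛb − b · ∂ₛa`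
  linear_combination (norm := skip) e
    + (D * (12 * x * s ^ 2 - 8 * x * s ^ 3)
      - (4 * x * s ^ 3 - 2 * x * s ^ 4) * (12 * x ^ 2 * s ^ 2 - 12 * x ^ 2 * s)) * h1
  rw [hD, quarticDerivS]
  ring

theorem quarticDerivS_pow_five_mul_deriv_deriv_deriv (hx : δ x = 1) (h : quartic x s = 0) :
    quarticDerivS x s ^ 5 * δ (δ (δ s)) =
      2304 * x * s ^ 5 - 2688 * x * s ^ 6 + 768 * x * s ^ 7 - 1152 * x ^ 3 * s ^ 8
        + 960 * x ^ 3 * s ^ 9 - 192 * x ^ 3 * s ^ 10 - 19200 * x ^ 5 * s ^ 9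
        + 46464 * x ^ 5 * s ^ 10 - 42624 * x ^ 5 * s ^ 11 + 17472 * x ^ 5 * s ^ 12
        - 2688 * x ^ 5 * s ^ 13 + 23040 * x ^ 7 * s ^ 11 - 67200 * x ^ 7 * s ^ 12
        + 80832 * x ^ 7 * s ^ 13 - 49536 * x ^ 7 * s ^ 14 + 15360 * x ^ 7 * s ^ 15
        - 1920 * x ^ 7 * s ^ 16 := by
  have h1 := quarticDerivS_mul_deriv δ hx h
  have e := δ.pow_add_three_mul_map_of_pow_add_one_mul_eq 2
    (quarticDerivS_pow_three_mul_deriv_deriv δ hx h)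
  simp only [deriv_quarticDerivS δ hx, map_sub, map_add, Derivation.leibniz,
    Derivation.leibniz_pow, hx, Derivation.map_ofNat, smul_eq_mul, nsmul_eq_mul] at e
  set D := quarticDerivS x s with hD
  linear_combination (norm := skip) e
    + (D * (48 * s ^ 2 - 32 * s ^ 3 + 480 * x ^ 2 * s ^ 4 - 672 * x ^ 2 * s ^ 5
          + 224 * x ^ 2 * s ^ 6 - 1680 * x ^ 4 * s ^ 6 + 3264 * x ^ 4 * s ^ 7
          - 2160 * x ^ 4 * s ^ 8 + 480 * x ^ 4 * s ^ 9)
      - 3 * (16 * s ^ 3 - 8 * s ^ 4 + 96 * x ^ 2 * s ^ 5 - 112 * x ^ 2 * s ^ 6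
          + 32 * x ^ 2 * s ^ 7 - 240 * x ^ 4 * s ^ 7 + 408 * x ^ 4 * s ^ 8
          - 240 * x ^ 4 * s ^ 9 + 48 * x ^ 4 * s ^ 10)
        * (12 * x ^ 2 * s ^ 2 - 12 * x ^ 2 * s)) * h1
  rw [hD, quarticDerivS]
  ring

theorem quarticDerivS_pow_five_mul_ode (hx : δ x = 1) (h : quartic x s = 0) :
    quarticDerivS x s ^ 5 *
      (9 * x ^ 3 * (x - 1) ^ 2 * (x + 1) ^ 2 * δ (δ (δ s))
        + 9 * x ^ 2 * (x - 1) * (x + 1) * (5 * x ^ 2 - 1) * δ (δ s)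
        + x * (35 * x ^ 4 - 14 * x ^ 2 - 13) * δ s - 4 * (x ^ 2 - 2) * s
        - (4 - 2 * x ^ 2)) = 0 := by
  have h1 := quarticDerivS_mul_deriv δ hx h
  have h2 := quarticDerivS_pow_three_mul_deriv_deriv δ hx h
  have h3 := quarticDerivS_pow_five_mul_deriv_deriv_deriv δ hx h
  rw [quartic] at h
  set D := quarticDerivS x s with hD
  linear_combination (norm := skip) 9 * x ^ 3 * (x - 1) ^ 2 * (x + 1) ^ 2 * h3
    + 9 * x ^ 2 * (x - 1) * (x + 1) * (5 * x ^ 2 - 1) * D ^ 2 * h2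
    + x * (35 * x ^ 4 - 14 * x ^ 2 - 13) * D ^ 4 * h1
    + (128 - 64 * x ^ 2 - 1920 * x ^ 2 * s ^ 2 + 1280 * x ^ 2 * s ^ 3 + 960 * x ^ 4 * s ^ 2
      + 3840 * x ^ 4 * s ^ 3 + 18240 * x ^ 4 * s ^ 4 - 28800 * x ^ 4 * s ^ 5
      + 9600 * x ^ 4 * s ^ 6 - 5120 * x ^ 6 * s ^ 3 - 13440 * x ^ 6 * s ^ 4
      + 21120 * x ^ 6 * s ^ 5 - 52800 * x ^ 6 * s ^ 6 + 84480 * x ^ 6 * s ^ 7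
      - 54720 * x ^ 6 * s ^ 8 + 12160 * x ^ 6 * s ^ 9 + 6144 * x ^ 8 * s ^ 5
      + 32640 * x ^ 8 * s ^ 6 - 76800 * x ^ 8 * s ^ 7 + 84480 * x ^ 8 * s ^ 8
      - 81920 * x ^ 8 * s ^ 9 + 63168 * x ^ 8 * s ^ 10 - 26880 * x ^ 8 * s ^ 11
      + 4480 * x ^ 8 * s ^ 12 - 22080 * x ^ 10 * s ^ 8 + 59520 * x ^ 10 * s ^ 9
      - 54912 * x ^ 10 * s ^ 10 + 23040 * x ^ 10 * s ^ 11 - 3840 * x ^ 10 * s ^ 12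
      - 5184 * x ^ 12 * s ^ 10 + 3840 * x ^ 12 * s ^ 11 - 640 * x ^ 12 * s ^ 12) * h
  rw [hD, quarticDerivS]
  ring

theorem isUnit_quarticDerivS_X {K : Type*} [CommRing K] (h2 : IsUnit (2 : K)) (S : K⟦X⟧) :
    IsUnit (quarticDerivS X S) := by
  simpa [quarticDerivS, PowerSeries.isUnit_iff_constantCoeff, map_ofNat] using h2

end QuarticODE

theorem stmt2_general (S : PowerSeries ℝ)
    (heq : X^2 * S^4 - 2 * X^2 * S^3 + 2 * S - 1 = 0) :
    9 * X^3 * (X - 1)^2 * (X + 1)^2 * (d⁄dX ℝ (d⁄dX ℝ (d⁄dX ℝ S)))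
      + 9 * X^2 * (X - 1) * (X + 1) * (5 * X^2 - 1) * (d⁄dX ℝ (d⁄dX ℝ S))
      + X * (35 * X^4 - 14 * X^2 - 13) * (d⁄dX ℝ S)
      - 4 * (X^2 - 2) * S
    = 4 - 2 * X^2 := by
  have hunit := QuarticODE.isUnit_quarticDerivS_X (IsUnit.mk0 (2 : ℝ) two_ne_zero) S
  rw [← sub_eq_zero, ← (hunit.pow 5).mul_right_eq_zero]
  exact QuarticODE.quarticDerivS_pow_five_mul_ode _ derivative_X heq

/-- The power series solution of `k²s⁴ − 2k²s³ + 2s − 1 = 0` with `s(0) = 1/2`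
satisfies the third order linear ODE
`9k³(k−1)²(k+1)² s''' + 9k²(k−1)(k+1)(5k²−1) s'' + k(35k⁴−14k²−13) s' − 4(k²−2)s = 4 − 2k²`. -/
theorem stmt2 (S : PowerSeries ℝ)
    (h0 : PowerSeries.constantCoeff (R := ℝ) S = 1/2)
    (heq : X^2 * S^4 - 2 * X^2 * S^3 + 2 * S - 1 = 0) :
    9 * X^3 * (X - 1)^2 * (X + 1)^2 * (d⁄dX ℝ (d⁄dX ℝ (d⁄dX ℝ S)))
      + 9 * X^2 * (X - 1) * (X + 1) * (5 * X^2 - 1) * (d⁄dX ℝ (d⁄dX ℝ S))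
      + X * (35 * X^4 - 14 * X^2 - 13) * (d⁄dX ℝ S)
      - 4 * (X^2 - 2) * S
    = 4 - 2 * X^2 :=
  stmt2_general S heq
end

section
/- For every k ∈ (0,1), the quartic polynomial q(t) = −27(1−k²)t⁴ + 18(1−k²)t² + 2(2−k²)²t + 1 − k² + k⁴ has exactly two real roots (counted without multiplicity the real root set has cardinality 2) and two non-real complex conjugate roots, and none of its roots is zero. -/
/-!
Write `a = 1 - k² ∈ (0,1)`. Since `q(-1) < 0 < q(0)` and `q(t) → -∞`, `q` has real roots
`r₁ < 0 < r₂`. Its derivative is `q'(t) = 2k⁴ - 108a(t + 1/3)²(t - 2/3)`, positive for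
`t ≤ 2/3` and strictly decreasing beyond, so `q` has a single critical point and, by Rolle,
no third real root. At a critical point `t > 2/3` one has `q(t) - (t/4)q'(t) > 0`, so `r₁, r₂`
are simple roots. Hence the quadratic cofactor of `(t - r₁)(t - r₂)` in `q` has no real zero,
i.e. a negative discriminant, and its two roots are non-real and conjugate.
-/

open Complex ComplexConjugate

section Algebra

variable {R : Type*} [CommRing R]

def quartic (k t : R) : R :=
  -27*(1 - k^2)*t^4 + 18*(1 - k^2)*t^2 + 2*(2 - k^2)^2*t + 1 - k^2 + k^4

def quarticDeriv (k t : R) : R :=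
  -108*(1 - k^2)*t^3 + 36*(1 - k^2)*t + 2*(2 - k^2)^2

/-- The quadratic `-q(t) / ((1 - k²)(t - r₁)(t - r₂))` when `r₁ ≠ r₂` are roots of `q`. -/
def quarticCofactor (r₁ r₂ t : R) : R :=
  27*(t*t) + 27*(r₁ + r₂)*t + (27*((r₁ + r₂)^2 - r₁*r₂) - 18)

lemma quarticCofactor_comm (r₁ r₂ t : R) :
    quarticCofactor r₁ r₂ t = quarticCofactor r₂ r₁ t := by
  unfold quarticCofactor; ring

variable [IsDomain R] {k r₁ r₂ : R}

lemma quartic_eq_mul_quarticCofactor (hne : r₁ ≠ r₂) (h₁ : quartic k r₁ = 0)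
    (h₂ : quartic k r₂ = 0) (t : R) :
    quartic k t = -(1 - k^2)*(t - r₁)*(t - r₂)*quarticCofactor r₁ r₂ t := by
  refine mul_left_cancel₀ (sub_ne_zero.mpr hne) ?_
  unfold quartic quarticCofactor at *
  linear_combination (t - r₂) * h₁ - (t - r₁) * h₂

/-- The derivative of the factorisation `quartic_eq_mul_quarticCofactor` at `t = r₁`. -/
lemma quarticDeriv_eq_mul_quarticCofactor (hne : r₁ ≠ r₂) (h₁ : quartic k r₁ = 0)
    (h₂ : quartic k r₂ = 0) :
    quarticDeriv k r₁ = -(1 - k^2)*(r₁ - r₂)*quarticCofactor r₁ r₂ r₁ := by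
  refine mul_left_cancel₀ (sub_ne_zero.mpr hne) ?_
  unfold quartic quarticDeriv quarticCofactor at *
  linear_combination h₁ - h₂

end Algebra

section Real

variable {k r₁ r₂ : ℝ}

lemma hasDerivAt_quartic (k t : ℝ) : HasDerivAt (quartic k) (quarticDeriv k t) t := by
  have h := ((((hasDerivAt_pow 4 t).const_mul (-27*(1 - k^2))).add
    ((hasDerivAt_pow 2 t).const_mul (18*(1 - k^2)))).add
    ((hasDerivAt_id t).const_mul (2*(2 - k^2)^2))).add_const (1 - k^2 + k^4)
  refine (h.congr_deriv ?_).congr_of_eventuallyEq (.of_forall fun x => ?_)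
  · simp only [quarticDeriv]; norm_num; ring
  · simp only [quartic, Pi.add_apply, id]; ring

lemma continuous_quartic (k : ℝ) : Continuous (quartic k) := by
  unfold quartic; fun_prop

lemma quarticDeriv_pos_of_le_two_thirds (hk : k ≠ 0) (hk₁ : k^2 < 1) {t : ℝ}
    (ht : t ≤ 2/3) :
    0 < quarticDeriv k t := by
  have hφ : 108*(1 - k^2)*((t + 1/3)^2*(t - 2/3)) ≤ 0 :=
    mul_nonpos_of_nonneg_of_nonpos (by linarith)
      (mul_nonpos_of_nonneg_of_nonpos (sq_nonneg _) (by linarith))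
  have : quarticDeriv k t = 2*k^4 - 108*(1 - k^2)*((t + 1/3)^2*(t - 2/3)) := by
    unfold quarticDeriv; ring
  rw [this]
  have : 0 < k^4 := by positivity
  linarith

lemma strictAntiOn_quarticDeriv (hk₁ : k^2 < 1) :
    StrictAntiOn (quarticDeriv k) (Set.Ici (1/3)) := by
  intro u hu v hv huv
  simp only [Set.mem_Ici] at hu hv
  have h : quarticDeriv k u - quarticDeriv k v
      = 36*(1 - k^2)*((v - u)*(3*(u^2 + u*v + v^2) - 1)) := by
    unfold quarticDeriv; ring
  have : 0 < (v - u)*(3*(u^2 + u*v + v^2) - 1) := mul_pos (by linarith) (by nlinarith)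
  nlinarith

lemma quarticDeriv_ne_zero_of_quartic_eq_zero (hk : k ≠ 0) (hk₁ : k^2 < 1) {t : ℝ}
    (ht : quartic k t = 0) : quarticDeriv k t ≠ 0 := by
  intro ht'
  have ht₀ : 2/3 < t := by
    by_contra! h
    exact (quarticDeriv_pos_of_le_two_thirds hk hk₁ h).ne' ht'
  have : quartic k t - t/4 * quarticDeriv k t
      = 9*(1 - k^2)*t^2 + 3/2*(2 - k^2)^2*t + ((k^2 - 1/2)^2 + 3/4) := by
    unfold quartic quarticDeriv; ring
  rw [ht, ht', mul_zero, sub_zero] at this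
  nlinarith [mul_pos (sub_pos.mpr hk₁) (pow_pos (by linarith : (0:ℝ) < t) 2),
    sq_nonneg (k^2 - 1/2), sq_nonneg (2 - k^2)]

lemma quartic_ne_zero_of_lt_of_lt (hk : k ≠ 0) (hk₁ : k^2 < 1) {x y z : ℝ}
    (hxy : x < y) (hyz : y < z) (hx : quartic k x = 0) (hy : quartic k y = 0) :
    quartic k z ≠ 0 := by
  intro hz
  obtain ⟨u, hu, hu'⟩ := exists_hasDerivAt_eq_zero hxy (continuous_quartic k).continuousOn
    (hx.trans hy.symm) fun t _ => hasDerivAt_quartic k t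
  obtain ⟨v, hv, hv'⟩ := exists_hasDerivAt_eq_zero hyz (continuous_quartic k).continuousOn
    (hy.trans hz.symm) fun t _ => hasDerivAt_quartic k t
  have hu₀ : 2/3 < u := by
    by_contra! h
    exact (quarticDeriv_pos_of_le_two_thirds hk hk₁ h).ne' hu'
  have := strictAntiOn_quarticDeriv hk₁ (by simp only [Set.mem_Ici]; linarith)
    (by simp only [Set.mem_Ici]; linarith [hu.2, hv.1]) (hu.2.trans hv.1)
  rw [hu', hv'] at this
  exact this.false

lemma quartic_zero_pos (k : ℝ) : 0 < quartic k 0 := by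
  unfold quartic
  nlinarith [sq_nonneg (k^2 - 1/2)]

lemma exists_two_quartic_roots (hk₁ : k^2 < 1) :
    ∃ r₁ r₂ : ℝ, r₁ < r₂ ∧ quartic k r₁ = 0 ∧ quartic k r₂ = 0 := by
  have ha : 0 < 1 - k^2 := sub_pos.mpr hk₁
  have hneg : quartic k (-1) < 0 := by unfold quartic; nlinarith
  obtain ⟨r₁, hr₁, h₁⟩ := intermediate_value_Ioo (by norm_num)
    (continuous_quartic k).continuousOn ⟨hneg, quartic_zero_pos k⟩
  -- at `T = (2 - k²)/(1 - k²)` the leading term `-27(1 - k²)T⁴ = -27(2 - k²)T³` dominates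
  set T := (2 - k^2)/(1 - k^2) with hT
  have haT : (1 - k^2)*T = 2 - k^2 := by rw [hT]; field_simp
  have hT2 : 2 ≤ T := by rw [hT, le_div_iff₀ ha]; nlinarith
  have hqT : quartic k T = T*(2 - k^2)*(-27*T^2 + 18 + 2*(2 - k^2)) + (1 - k^2 + k^4) := by
    unfold quartic; linear_combination (-27*T^3 + 18*T) * haT
  have hpos : quartic k T < 0 := by
    rw [hqT]
    nlinarith [mul_le_mul hT2 (by nlinarith : (1:ℝ) ≤ 2 - k^2) zero_le_one (by linarith),
      mul_le_mul hT2 hT2 zero_le_two (by linarith), sq_nonneg k]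
  obtain ⟨r₂, hr₂, h₂⟩ := intermediate_value_Ioo' (by linarith)
    (continuous_quartic k).continuousOn ⟨hpos, quartic_zero_pos k⟩
  exact ⟨r₁, r₂, hr₁.2.trans hr₂.1, h₁, h₂⟩

lemma eq_or_eq_of_quartic_eq_zero (hk : k ≠ 0) (hk₁ : k^2 < 1) (h12 : r₁ < r₂)
    (h₁ : quartic k r₁ = 0) (h₂ : quartic k r₂ = 0) {t : ℝ} (ht : quartic k t = 0) :
    t = r₁ ∨ t = r₂ := by
  rcases lt_trichotomy t r₁ with h | rfl | h
  · exact absurd h₂ (quartic_ne_zero_of_lt_of_lt hk hk₁ h h12 ht h₁)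
  · exact .inl rfl
  rcases lt_trichotomy t r₂ with h' | rfl | h'
  · exact absurd h₂ (quartic_ne_zero_of_lt_of_lt hk hk₁ h h' h₁ ht)
  · exact .inr rfl
  · exact absurd ht (quartic_ne_zero_of_lt_of_lt hk hk₁ h12 h' h₁ h₂)

/-- A real zero of the cofactor would be a third real root or a double root of `q`. -/
lemma quarticCofactor_ne_zero (hk : k ≠ 0) (hk₁ : k^2 < 1) (h12 : r₁ < r₂)
    (h₁ : quartic k r₁ = 0) (h₂ : quartic k r₂ = 0) (x : ℝ) :
    quarticCofactor r₁ r₂ x ≠ 0 := by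
  intro hx
  have hqx : quartic k x = 0 := by
    rw [quartic_eq_mul_quarticCofactor h12.ne h₁ h₂, hx, mul_zero]
  rcases eq_or_eq_of_quartic_eq_zero hk hk₁ h12 h₁ h₂ hqx with rfl | rfl
  · refine quarticDeriv_ne_zero_of_quartic_eq_zero hk hk₁ h₁ ?_
    rw [quarticDeriv_eq_mul_quarticCofactor h12.ne h₁ h₂, hx, mul_zero]
  · refine quarticDeriv_ne_zero_of_quartic_eq_zero hk hk₁ h₂ ?_
    rw [quarticDeriv_eq_mul_quarticCofactor h12.ne' h₂ h₁, quarticCofactor_comm, hx, mul_zero]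

lemma discrim_quarticCofactor_neg (hk : k ≠ 0) (hk₁ : k^2 < 1) (h12 : r₁ < r₂)
    (h₁ : quartic k r₁ = 0) (h₂ : quartic k r₂ = 0) :
    discrim 27 (27*(r₁ + r₂)) (27*((r₁ + r₂)^2 - r₁*r₂) - 18) < 0 := by
  by_contra! h
  obtain ⟨x, hx⟩ := exists_quadratic_eq_zero (by norm_num) ⟨_, (Real.mul_self_sqrt h).symm⟩
  exact quarticCofactor_ne_zero hk hk₁ h12 h₁ h₂ x hx

end Real

section ComplexRoots

variable {f : ℂ → ℂ} {r₁ r₂ : ℝ} {z : ℂ}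

lemma exists_conj_roots_of_discrim_neg {a b c : ℝ} (ha : a ≠ 0) (hd : discrim a b c < 0) :
    ∃ z : ℂ, z.im ≠ 0 ∧
      ∀ w : ℂ, (a : ℂ)*(w*w) + b*w + c = 0 ↔ w = z ∨ w = conj z := by
  set r := √(-discrim a b c)
  have hr : 0 < r := Real.sqrt_pos.mpr (neg_pos.mpr hd)
  have hs : discrim (a : ℂ) b c = (r * I) * (r * I) := by
    have hD : discrim a b c = -(r * r) := by rw [Real.mul_self_sqrt (neg_pos.mpr hd).le]; ring
    have : discrim (a : ℂ) b c = ((discrim a b c : ℝ) : ℂ) := by simp [discrim]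
    rw [this, hD]; push_cast
    linear_combination -(r : ℂ)^2 * I_sq
  refine ⟨(-b/(2*a) : ℝ) + (r/(2*a) : ℝ) * I, ?_, fun w => ?_⟩
  · simp only [add_im, ofReal_im, mul_im, ofReal_re, I_re, I_im]
    simp [ha, hr.ne']
  rw [quadratic_eq_zero_iff (by exact_mod_cast ha) hs]
  simp only [map_add, map_mul, conj_ofReal, conj_I]
  push_cast
  constructor <;> rintro (h | h) <;> [left; right; left; right] <;> rw [h] <;> ring

lemma setOf_ofReal_eq_zero_eq_pair (hz : z.im ≠ 0)
    (hf : ∀ w, f w = 0 ↔ w = r₁ ∨ w = r₂ ∨ w = z ∨ w = conj z) :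
    {t : ℝ | f t = 0} = {r₁, r₂} := by
  have hz' (t : ℝ) : (t : ℂ) ≠ z ∧ (t : ℂ) ≠ conj z :=
    ⟨fun h => hz (by simp [← h]), fun h => hz (by simpa using congrArg im h.symm)⟩
  ext t
  simp [hf, hz' t]

lemma setOf_eq_zero_and_im_ne_zero_eq_pair (hz : z.im ≠ 0)
    (hf : ∀ w, f w = 0 ↔ w = r₁ ∨ w = r₂ ∨ w = z ∨ w = conj z) :
    {w : ℂ | f w = 0 ∧ w.im ≠ 0} = {z, conj z} := by
  ext w
  simp only [Set.mem_ofPred_eq, hf, Set.mem_insert_iff, Set.mem_singleton_iff]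
  constructor
  · rintro ⟨rfl | rfl | h, him⟩
    · exact absurd (ofReal_im r₁) him
    · exact absurd (ofReal_im r₂) him
    · exact h
  · rintro (rfl | rfl)
    · exact ⟨by simp, hz⟩
    · exact ⟨by simp, by simpa using hz⟩

end ComplexRoots

lemma ofReal_quartic (k t : ℝ) : ((quartic k t : ℝ) : ℂ) = quartic (k : ℂ) (t : ℂ) := by
  unfold quartic; push_cast; ring

lemma exists_quartic_roots {k : ℝ} (hk : k ≠ 0) (hk₁ : k^2 < 1) :
    ∃ r₁ r₂ : ℝ, r₁ ≠ r₂ ∧ ∃ z : ℂ, z.im ≠ 0 ∧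
      ∀ w : ℂ, quartic (k : ℂ) w = 0 ↔ w = r₁ ∨ w = r₂ ∨ w = z ∨ w = conj z := by
  obtain ⟨r₁, r₂, h12, h₁, h₂⟩ := exists_two_quartic_roots hk₁
  obtain ⟨z, hz, hzw⟩ := exists_conj_roots_of_discrim_neg (by norm_num)
    (discrim_quarticCofactor_neg hk hk₁ h12 h₁ h₂)
  refine ⟨r₁, r₂, h12.ne, z, hz, fun w => ?_⟩
  have hC₁ : quartic (k : ℂ) r₁ = 0 := by rw [← ofReal_quartic, h₁, ofReal_zero]
  have hC₂ : quartic (k : ℂ) r₂ = 0 := by rw [← ofReal_quartic, h₂, ofReal_zero]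
  have ha : (1 : ℂ) - k^2 ≠ 0 := by exact_mod_cast (sub_pos.mpr hk₁).ne'
  have hQ : quarticCofactor (r₁ : ℂ) r₂ w
      = ((27 : ℝ) : ℂ)*(w*w) + ((27*(r₁ + r₂) : ℝ) : ℂ)*w
        + ((27*((r₁ + r₂)^2 - r₁*r₂) - 18 : ℝ) : ℂ) := by
    unfold quarticCofactor; push_cast; ring
  rw [quartic_eq_mul_quarticCofactor (ofReal_injective.ne h12.ne) hC₁ hC₂, hQ]
  simp only [mul_eq_zero, neg_eq_zero, ha, sub_eq_zero, hzw, false_or, or_assoc]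

/-- For every `k ∈ (0,1)`, the quartic
`q(t) = −27(1−k²)t⁴ + 18(1−k²)t² + 2(2−k²)²t + 1 − k² + k⁴` has exactly two
real roots, its non-real roots form a conjugate pair `{z, z̄}` with `z` non-real,
and no root is zero. -/
theorem stmt14 (k : ℝ) (hk : k ∈ Set.Ioo (0:ℝ) 1)
    (q : ℂ → ℂ)
    (hq : ∀ t : ℂ, q t = -27*(1 - (k:ℂ)^2)*t^4 + 18*(1 - (k:ℂ)^2)*t^2
      + 2*(2 - (k:ℂ)^2)^2*t + 1 - (k:ℂ)^2 + (k:ℂ)^4) :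
    ({t : ℝ | q (t : ℂ) = 0}).ncard = 2 ∧
    (∃ z : ℂ, z.im ≠ 0 ∧
      {w : ℂ | q w = 0 ∧ w.im ≠ 0} = {z, starRingEnd ℂ z}) ∧
    (∀ w : ℂ, q w = 0 → w ≠ 0) := by
  obtain rfl : q = quartic (k : ℂ) := funext hq
  obtain ⟨r₁, r₂, hne, z, hz, hroots⟩ :=
    exists_quartic_roots hk.1.ne' (by nlinarith [hk.1, hk.2])
  refine ⟨?_, ⟨z, hz, setOf_eq_zero_and_im_ne_zero_eq_pair hz hroots⟩, ?_⟩
  · rw [setOf_ofReal_eq_zero_eq_pair hz hroots, Set.ncard_pair hne]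
  · rintro w hw rfl
    have h₀ := ofReal_quartic k 0
    rw [ofReal_zero, hw, ofReal_eq_zero] at h₀
    exact (quartic_zero_pos k).ne' h₀
end
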